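/- There exist real constants σ* > 1 and C > 0 such that for every real σ ≥ σ*: f₂(σ) ≠ 0, the value f₂(1−σ)/f₂(σ) is a positive real number, and f₂(1−σ)/f₂(σ) ≤ C·σ^{−2}. In particular f₂(1−σ)/f₂(σ) → 0 as σ → +∞. -/

import Mathlib

open Complex

noncomputable def chi (s : ℂ) : ℂ := s * (s - 1) * completedRiemannZeta₀ s + 1

noncomputable def A : ℂ := Real.pi / 3 - 1

noncomputable def f1 (s : ℂ) : ℂ :=
  (s - 1) * ((s - 1) * (3 * s - 2) * (A * s - A + 1) * chi (s + 1) * chi (3 * s)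
    - (s + 1) * (s - 2) * chi s * chi (3 * s - 1)
    - 2 * (s - 1) * (s - 2) * chi s * chi (3 * s))

noncomputable def f2 (s : ℂ) : ℂ :=
  (s - 2) * ((A * s + 3) * (s - 1) ^ 2 * chi (s + 2)
    - 2 * (s - 1) * (s - 3) * chi (s + 1)
    - (s + 2) * (s - 3) * chi s)

noncomputable def Z1 (s : ℂ) : ℂ := chi (2 * s) * f1 s - chi (2 * s - 1) * f1 (1 - s)

noncomputable def Z2 (s : ℂ) : ℂ := chi (2 * s) * f2 s - chi (2 * s - 1) * f2 (1 - s)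

/-!
For real `σ > 1` we have `χ(σ) = σ (σ - 1) Γℝ(σ) ζ(σ)` with `Γℝ(σ) = π^(-σ/2) Γ(σ/2) > 0` and
`1 ≤ ζ(σ) ≤ ζ(2) < 2`, so `f₂(σ)` is real; by `χ(1 - s) = χ(s)` so is `f₂(1 - σ)`, which becomes
a combination of `χ(σ - 2)`, `χ(σ - 1)`, `χ(σ)` with positive coefficients. Measuring every term
against a single Gamma value via `Γℝ(σ + 2) = σ Γℝ(σ) / (2π)` and `Γℝ(σ + 1) ≤ 2 Γℝ(σ + 2)`,
the term `A σ³ χ(σ + 2)` gives `f₂(σ) ≥ σ⁶ Γℝ(σ + 2) / 200`, while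
`f₂(1 - σ) = O(σ⁵ Γℝ(σ)) = O(σ⁴ Γℝ(σ + 2))`.
-/

open Real Filter

noncomputable def zetaReal (σ : ℝ) : ℝ := ∑' n : ℕ, 1 / ((n : ℝ) + 1) ^ σ

noncomputable def gammaℝReal (σ : ℝ) : ℝ := π ^ (-σ / 2) * Real.Gamma (σ / 2)

noncomputable def completedZetaReal (σ : ℝ) : ℝ := gammaℝReal σ * zetaReal σ

noncomputable def chiReal (σ : ℝ) : ℝ := σ * (σ - 1) * completedZetaReal σ

lemma summable_one_div_nat_add_one_rpow {σ : ℝ} (hσ : 1 < σ) :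
    Summable fun n : ℕ => 1 / ((n : ℝ) + 1) ^ σ := by
  refine ((Real.summable_one_div_nat_add_rpow 1 σ).mpr hσ).congr fun n => ?_
  rw [abs_of_nonneg (by positivity)]

lemma riemannZeta_ofReal {σ : ℝ} (hσ : 1 < σ) : riemannZeta σ = zetaReal σ := by
  rw [zeta_eq_tsum_one_div_nat_add_one_cpow (by simpa using hσ), zetaReal, ofReal_tsum]
  congr 1 with n
  rw [ofReal_div, ofReal_one, ofReal_cpow (by positivity)]
  push_cast
  rfl

lemma one_le_zetaReal {σ : ℝ} (hσ : 1 < σ) : 1 ≤ zetaReal σ := by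
  simpa [zetaReal] using (summable_one_div_nat_add_one_rpow hσ).le_tsum 0 fun n _ => by positivity

lemma zetaReal_two : zetaReal 2 = π ^ 2 / 6 := by
  have h := riemannZeta_ofReal one_lt_two
  rw [ofReal_ofNat, riemannZeta_two] at h
  exact_mod_cast h.symm

lemma zetaReal_le_two {σ : ℝ} (hσ : 2 ≤ σ) : zetaReal σ ≤ 2 := by
  have hmono : zetaReal σ ≤ zetaReal 2 := by
    refine (summable_one_div_nat_add_one_rpow (by linarith)).tsum_le_tsum (fun n => ?_)
      (summable_one_div_nat_add_one_rpow one_lt_two)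
    have : (1 : ℝ) ≤ n + 1 := by simp
    gcongr
  rw [zetaReal_two] at hmono
  nlinarith [pi_lt_d2, pi_pos]

lemma gammaℝReal_pos {σ : ℝ} (hσ : 0 < σ) : 0 < gammaℝReal σ :=
  mul_pos (rpow_pos_of_pos pi_pos _) (Gamma_pos_of_pos (by linarith))

lemma gammaℝReal_add_two {σ : ℝ} (hσ : 0 < σ) :
    gammaℝReal (σ + 2) = σ / (2 * π) * gammaℝReal σ := by
  have hΓ : Real.Gamma ((σ + 2) / 2) = σ / 2 * Real.Gamma (σ / 2) := by
    rw [add_div, div_self two_ne_zero, Real.Gamma_add_one (by positivity)]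
  have hπ : π ^ (-(σ + 2) / 2) = π ^ (-σ / 2) * π⁻¹ := by
    rw [← rpow_neg_one, ← rpow_add pi_pos]; ring_nf
  rw [gammaℝReal, gammaℝReal, hΓ, hπ]
  field_simp

lemma mul_gammaℝReal_le {σ : ℝ} (hσ : 0 < σ) : σ * gammaℝReal σ ≤ 8 * gammaℝReal (σ + 2) := by
  rw [gammaℝReal_add_two hσ]
  have := gammaℝReal_pos hσ
  field_simp
  linarith [pi_le_four]

lemma gammaℝReal_add_one_le {σ : ℝ} (hσ : 3 ≤ σ) :
    gammaℝReal (σ + 1) ≤ 2 * gammaℝReal (σ + 2) := by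
  have hΓ : Real.Gamma ((σ + 1) / 2) ≤ Real.Gamma ((σ + 2) / 2) :=
    Real.Gamma_strictMonoOn_Ici.monotoneOn (by simp; linarith) (by simp; linarith)
      (by linarith)
  have hπ : π ^ (-(σ + 1) / 2) = √π * π ^ (-(σ + 2) / 2) := by
    rw [sqrt_eq_rpow, ← rpow_add pi_pos]; ring_nf
  have hsqrt : √π ≤ 2 := by
    rw [sqrt_le_left (by norm_num)]; linarith [pi_le_four]
  rw [gammaℝReal, gammaℝReal, hπ, mul_assoc]
  gcongr

lemma gammaℝReal_le_completedZetaReal {σ : ℝ} (hσ : 1 < σ) : gammaℝReal σ ≤ completedZetaReal σ :=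
  le_mul_of_one_le_right (gammaℝReal_pos (by linarith)).le (one_le_zetaReal hσ)

lemma completedZetaReal_le {σ : ℝ} (hσ : 2 ≤ σ) : completedZetaReal σ ≤ 2 * gammaℝReal σ := by
  rw [completedZetaReal, mul_comm 2]
  exact mul_le_mul_of_nonneg_left (zetaReal_le_two hσ) (gammaℝReal_pos (by linarith)).le

lemma Gammaℝ_ofReal (σ : ℝ) : Gammaℝ σ = gammaℝReal σ := by
  rw [Gammaℝ_def, gammaℝReal, ofReal_mul, ofReal_cpow pi_pos.le, ← Complex.Gamma_ofReal]
  push_cast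
  rfl

lemma completedRiemannZeta_ofReal {σ : ℝ} (hσ : 1 < σ) :
    completedRiemannZeta σ = completedZetaReal σ := by
  have hΓ : Gammaℝ σ ≠ 0 := Gammaℝ_ne_zero_of_re_pos (by simp; linarith)
  rw [completedZetaReal, ofReal_mul, ← Gammaℝ_ofReal, ← riemannZeta_ofReal hσ,
    riemannZeta_def_of_ne_zero (by simp; linarith), mul_div_cancel₀ _ hΓ]

lemma chi_eq {s : ℂ} (h₀ : s ≠ 0) (h₁ : s ≠ 1) : chi s = s * (s - 1) * completedRiemannZeta s := by
  have h₁' : 1 - s ≠ 0 := sub_ne_zero.mpr h₁.symm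
  rw [chi, completedRiemannZeta_eq]
  field_simp
  ring

lemma chi_ofReal {σ : ℝ} (hσ : 1 < σ) : chi σ = chiReal σ := by
  rw [chi_eq (by simp; linarith) (by norm_cast; linarith), completedRiemannZeta_ofReal hσ, chiReal]
  push_cast
  ring

lemma chi_one_sub (s : ℂ) : chi (1 - s) = chi s := by
  rw [chi, chi, completedRiemannZeta₀_one_sub]
  ring

lemma A_eq_ofReal : A = ((π / 3 - 1 : ℝ) : ℂ) := by
  push_cast
  rfl

noncomputable def f2Real (σ : ℝ) : ℝ :=
  (σ - 2) * (((π / 3 - 1) * σ + 3) * (σ - 1) ^ 2 * chiReal (σ + 2)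
    - 2 * (σ - 1) * (σ - 3) * chiReal (σ + 1)
    - (σ + 2) * (σ - 3) * chiReal σ)

noncomputable def f2OneSubReal (σ : ℝ) : ℝ :=
  (σ + 1) * (((π / 3 - 1) * (σ - 1) - 3) * σ ^ 2 * chiReal (σ - 2)
    + 2 * σ * (σ + 2) * chiReal (σ - 1)
    + (σ + 2) * (σ - 3) * chiReal σ)

lemma f2_ofReal {σ : ℝ} (hσ : 1 < σ) : f2 σ = f2Real σ := by
  rw [f2, f2Real, A_eq_ofReal]
  push_cast
  rw [← chi_ofReal hσ, ← chi_ofReal (by linarith : 1 < σ + 1),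
    ← chi_ofReal (by linarith : 1 < σ + 2)]
  push_cast
  ring

lemma f2_one_sub_ofReal {σ : ℝ} (hσ : 3 < σ) : f2 (1 - σ) = f2OneSubReal σ := by
  have h₂ : 1 - (σ : ℂ) + 2 = 1 - ((σ - 2 : ℝ) : ℂ) := by push_cast; ring
  have h₁ : 1 - (σ : ℂ) + 1 = 1 - ((σ - 1 : ℝ) : ℂ) := by push_cast; ring
  rw [f2, h₂, h₁, chi_one_sub, chi_one_sub, chi_one_sub, f2OneSubReal, A_eq_ofReal,
    chi_ofReal (by linarith : 1 < σ - 2), chi_ofReal (by linarith : 1 < σ - 1),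
    chi_ofReal (by linarith)]
  push_cast
  ring

lemma pi_div_three_sub_one_mem : π / 3 - 1 ∈ Set.Icc (1 / 25 : ℝ) (1 / 3) := by
  constructor <;> linarith [pi_gt_d2, pi_le_four]

lemma mul_gammaℝReal_le_chiReal {σ : ℝ} (hσ : 1 < σ) :
    σ * (σ - 1) * gammaℝReal σ ≤ chiReal σ := by
  have : 0 ≤ σ - 1 := by linarith
  unfold chiReal
  gcongr
  exact gammaℝReal_le_completedZetaReal hσ

lemma chiReal_pos {σ : ℝ} (hσ : 1 < σ) : 0 < chiReal σ := by
  have := gammaℝReal_pos (σ := σ) (by linarith)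
  have : 0 < σ - 1 := by linarith
  exact lt_of_lt_of_le (by positivity) (mul_gammaℝReal_le_chiReal hσ)

lemma chiReal_le {σ : ℝ} (hσ : 2 ≤ σ) : chiReal σ ≤ σ * (σ - 1) * (2 * gammaℝReal σ) := by
  have : 0 ≤ σ - 1 := by linarith
  unfold chiReal
  gcongr
  exact completedZetaReal_le hσ

lemma chiReal_add_one_le {σ : ℝ} (hσ : 3 ≤ σ) :
    chiReal (σ + 1) ≤ (σ + 1) * σ * (4 * gammaℝReal (σ + 2)) := by
  refine (chiReal_le (by linarith)).trans ?_
  rw [add_sub_cancel_right]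
  exact mul_le_mul_of_nonneg_left (by linarith [gammaℝReal_add_one_le hσ]) (by nlinarith)

lemma chiReal_le_gammaℝReal_add_two {σ : ℝ} (hσ : 2 ≤ σ) :
    chiReal σ ≤ (σ - 1) * (16 * gammaℝReal (σ + 2)) := by
  refine (chiReal_le hσ).trans ?_
  have := mul_gammaℝReal_le (σ := σ) (by linarith)
  calc σ * (σ - 1) * (2 * gammaℝReal σ) = (σ - 1) * (2 * (σ * gammaℝReal σ)) := by ring
    _ ≤ (σ - 1) * (16 * gammaℝReal (σ + 2)) :=
      mul_le_mul_of_nonneg_left (by linarith) (by linarith)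

lemma f2Real_poly_bound {σ : ℝ} (hσ : 1000 ≤ σ) :
    σ ^ 5 / 100 + 8 * ((σ - 1) * (σ - 3) * (σ + 1) * σ) + 16 * ((σ + 2) * (σ - 3) * (σ - 1))
      ≤ σ / 25 * (σ - 1) ^ 2 * ((σ + 2) * (σ + 1)) := by
  -- after substituting `σ = t + 1000` every coefficient of the difference is nonnegative
  obtain ⟨t, ht, rfl⟩ : ∃ t, 0 ≤ t ∧ σ = t + 1000 := ⟨σ - 1000, by linarith, by ring⟩
  rw [← sub_nonneg]
  ring_nf
  positivity

lemma f2Real_lower {σ : ℝ} (hσ : 1000 ≤ σ) :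
    (σ - 2) * (σ ^ 5 / 100 * gammaℝReal (σ + 2)) ≤ f2Real σ := by
  set b := gammaℝReal (σ + 2)
  have hb : 0 < b := gammaℝReal_pos (by linarith)
  have h₂ : (σ + 2) * (σ + 1) * b ≤ chiReal (σ + 2) := by
    have := mul_gammaℝReal_le_chiReal (σ := σ + 2) (by linarith)
    rwa [show σ + 2 - 1 = σ + 1 by ring] at this
  have h₁ := chiReal_add_one_le (σ := σ) (by linarith)
  have h₀ := chiReal_le_gammaℝReal_add_two (σ := σ) (by linarith)
  have hlead : σ / 25 * (σ - 1) ^ 2 * ((σ + 2) * (σ + 1) * b)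
      ≤ ((π / 3 - 1) * σ + 3) * (σ - 1) ^ 2 * chiReal (σ + 2) := by
    have ha : σ / 25 ≤ (π / 3 - 1) * σ + 3 := by nlinarith [pi_div_three_sub_one_mem.1]
    gcongr
    exact mul_nonneg (by linarith) (sq_nonneg _)
  rw [f2Real]
  gcongr
  · linarith
  nlinarith [mul_le_mul_of_nonneg_right (f2Real_poly_bound hσ) hb.le,
    mul_le_mul_of_nonneg_left h₁ (by nlinarith : 0 ≤ 2 * (σ - 1) * (σ - 3)),
    mul_le_mul_of_nonneg_left h₀ (by nlinarith : 0 ≤ (σ + 2) * (σ - 3))]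

lemma f2Real_pos {σ : ℝ} (hσ : 1000 ≤ σ) : 0 < f2Real σ := by
  refine lt_of_lt_of_le ?_ (f2Real_lower hσ)
  have := gammaℝReal_pos (σ := σ + 2) (by linarith)
  have : 0 < σ - 2 := by linarith
  positivity

lemma f2OneSubReal_poly_bound {σ : ℝ} (hσ : 1000 ≤ σ) :
    16 * (((σ - 1) / 3 - 3) * σ ^ 2 * (σ - 3)) + 8 * (σ * (σ + 2) * (σ - 1) * (σ - 2))
      + 2 * ((σ + 2) * (σ - 3) * σ * (σ - 1)) ≤ 16 * σ ^ 4 := by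
  obtain ⟨t, ht, rfl⟩ : ∃ t, 0 ≤ t ∧ σ = t + 1000 := ⟨σ - 1000, by linarith, by ring⟩
  rw [← sub_nonneg]
  ring_nf
  positivity

lemma f2OneSubReal_pos {σ : ℝ} (hσ : 1000 ≤ σ) : 0 < f2OneSubReal σ := by
  have ha : 0 < (π / 3 - 1) * (σ - 1) - 3 := by nlinarith [pi_div_three_sub_one_mem.1]
  have h₂ := chiReal_pos (σ := σ - 2) (by linarith)
  have h₁ := chiReal_pos (σ := σ - 1) (by linarith)
  have h₀ := chiReal_pos (σ := σ) (by linarith)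
  have h₃ : 0 < σ - 3 := by linarith
  unfold f2OneSubReal
  positivity

lemma f2OneSubReal_le {σ : ℝ} (hσ : 1000 ≤ σ) :
    f2OneSubReal σ ≤ (σ + 1) * (16 * σ ^ 4 * gammaℝReal σ) := by
  set b := gammaℝReal σ
  have hb : 0 < b := gammaℝReal_pos (by linarith)
  have h₂ : chiReal (σ - 2) ≤ (σ - 3) * (16 * b) := by
    have := chiReal_le_gammaℝReal_add_two (σ := σ - 2) (by linarith)
    rwa [sub_add_cancel, sub_sub, show (2 : ℝ) + 1 = 3 by norm_num] at this
  have h₁ : chiReal (σ - 1) ≤ (σ - 1) * (σ - 2) * (4 * b) := by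
    have := chiReal_add_one_le (σ := σ - 2) (by linarith)
    rwa [sub_add_cancel, show σ - 2 + 1 = σ - 1 by ring] at this
  have h₀ := chiReal_le (σ := σ) (by linarith)
  have hlead : ((π / 3 - 1) * (σ - 1) - 3) * σ ^ 2 * chiReal (σ - 2)
      ≤ ((σ - 1) / 3 - 3) * σ ^ 2 * ((σ - 3) * (16 * b)) := by
    have ha : (π / 3 - 1) * (σ - 1) - 3 ≤ (σ - 1) / 3 - 3 := by
      nlinarith [pi_div_three_sub_one_mem.2]
    have hσ₂ : 0 ≤ ((σ - 1) / 3 - 3) * σ ^ 2 := by nlinarith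
    exact mul_le_mul (mul_le_mul_of_nonneg_right ha (sq_nonneg σ)) h₂
      (chiReal_pos (by linarith)).le hσ₂
  rw [f2OneSubReal]
  gcongr
  nlinarith [mul_le_mul_of_nonneg_right (f2OneSubReal_poly_bound hσ) hb.le,
    mul_le_mul_of_nonneg_left h₁ (by nlinarith : 0 ≤ 2 * σ * (σ + 2)),
    mul_le_mul_of_nonneg_left h₀ (by nlinarith : 0 ≤ (σ + 2) * (σ - 3))]

lemma sq_mul_f2OneSubReal_le {σ : ℝ} (hσ : 1000 ≤ σ) :
    σ ^ 2 * f2OneSubReal σ ≤ 10 ^ 5 * f2Real σ := by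
  have hb := mul_gammaℝReal_le (σ := σ) (by linarith)
  have hb₂ : 0 < gammaℝReal (σ + 2) := gammaℝReal_pos (by linarith)
  calc σ ^ 2 * f2OneSubReal σ ≤ σ ^ 2 * ((σ + 1) * (16 * σ ^ 4 * gammaℝReal σ)) := by
        gcongr
        exact f2OneSubReal_le hσ
    _ = 16 * σ ^ 5 * (σ + 1) * (σ * gammaℝReal σ) := by ring
    _ ≤ 16 * σ ^ 5 * (σ + 1) * (8 * gammaℝReal (σ + 2)) := by gcongr
    _ ≤ 10 ^ 5 * ((σ - 2) * (σ ^ 5 / 100 * gammaℝReal (σ + 2))) := by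
        nlinarith [mul_pos (pow_pos (by linarith : (0 : ℝ) < σ) 5) hb₂]
    _ ≤ 10 ^ 5 * f2Real σ := by
        gcongr
        exact f2Real_lower hσ

lemma f2_ratio_eq {σ : ℝ} (hσ : 1000 ≤ σ) :
    f2 (1 - σ) / f2 σ = ((f2OneSubReal σ / f2Real σ : ℝ) : ℂ) := by
  rw [f2_ofReal (by linarith), f2_one_sub_ofReal (by linarith), ofReal_div]

lemma f2OneSubReal_div_f2Real_le {σ : ℝ} (hσ : 1000 ≤ σ) :
    f2OneSubReal σ / f2Real σ ≤ 10 ^ 5 * σ ^ (-2 : ℤ) := by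
  rw [div_le_iff₀ (f2Real_pos hσ), zpow_neg, zpow_two, ← sq]
  have := sq_mul_f2OneSubReal_le hσ
  have : 0 < σ ^ 2 := by positivity
  field_simp
  linarith

theorem f2_ratio_decay :
    ∃ σstar C : ℝ, 1 < σstar ∧ 0 < C ∧
      (∀ σ : ℝ, σstar ≤ σ →
        f2 (σ : ℂ) ≠ 0 ∧
        (f2 (1 - (σ : ℂ)) / f2 (σ : ℂ)).im = 0 ∧
        0 < (f2 (1 - (σ : ℂ)) / f2 (σ : ℂ)).re ∧
        (f2 (1 - (σ : ℂ)) / f2 (σ : ℂ)).re ≤ C * σ ^ (-2 : ℤ)) ∧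
      Filter.Tendsto (fun σ : ℝ => f2 (1 - (σ : ℂ)) / f2 (σ : ℂ))
        Filter.atTop (nhds 0) := by
  have hbound (σ : ℝ) (hσ : 1000 ≤ σ) :
      f2 σ ≠ 0 ∧ (f2 (1 - σ) / f2 σ).im = 0 ∧ 0 < (f2 (1 - σ) / f2 σ).re ∧
        (f2 (1 - σ) / f2 σ).re ≤ 10 ^ 5 * σ ^ (-2 : ℤ) := by
    rw [f2_ratio_eq hσ, ofReal_re, ofReal_im, f2_ofReal (by linarith), ofReal_ne_zero]
    exact ⟨(f2Real_pos hσ).ne', rfl, div_pos (f2OneSubReal_pos hσ) (f2Real_pos hσ),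
      f2OneSubReal_div_f2Real_le hσ⟩
  refine ⟨1000, 10 ^ 5, by norm_num, by norm_num, hbound, ?_⟩
  refine squeeze_zero_norm' ?_ (by
    simpa using (tendsto_zpow_atTop_zero (n := -2) (by norm_num)).const_mul (10 ^ 5 : ℝ))
  filter_upwards [eventually_ge_atTop 1000] with σ hσ
  rw [f2_ratio_eq hσ, norm_real, norm_of_nonneg (div_pos (f2OneSubReal_pos hσ) (f2Real_pos hσ)).le]
  exact f2OneSubReal_div_f2Real_le hσ
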